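/- The six vectors |w_{0j}⟩, |w_{1j}⟩ (j = 0,1,2) form an orthonormal basis of ℂ² ⊗ ℂ³; consequently the operator U_{2×3} is unitary. -/
import Mathlib


open scoped Matrix

/-- The primitive cube root of unity `ω = e^{2πi/3}`. -/
noncomputable def ω : ℂ := Complex.exp (2 * Real.pi * Complex.I / 3)

/-- The "trine" states `|α⟩, |β⟩, |γ⟩` in `ℂ²`. -/
noncomputable def trine : Fin 3 → Fin 2 → ℂ :=
  ![![1, 0],
    ![-(1/2 : ℂ), (Real.sqrt 3 : ℂ) / 2],
    ![-(1/2 : ℂ), -((Real.sqrt 3 : ℂ) / 2)]]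

/-- The orthogonal trine states `|α⊥⟩, |β⊥⟩, |γ⊥⟩` in `ℂ²`. -/
noncomputable def trinePerp : Fin 3 → Fin 2 → ℂ :=
  ![![0, 1],
    ![-((Real.sqrt 3 : ℂ) / 2), -(1/2 : ℂ)],
    ![(Real.sqrt 3 : ℂ) / 2, -(1/2 : ℂ)]]

/-- The vectors `|w_{ij}⟩` in `ℂ² ⊗ ℂ³`:
`|w_{0j}⟩ = (1/√3)(|α⟩|0⟩ + ω^j |β⟩|1⟩ + ω^{2j} |γ⟩|2⟩)` and
`|w_{1j}⟩ = (1/√3)(|α⊥⟩|0⟩ + ω^j |β⊥⟩|1⟩ + ω^{2j} |γ⊥⟩|2⟩)`. -/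
noncomputable def w (i : Fin 2) (j : Fin 3) : Fin 2 × Fin 3 → ℂ :=
  fun p => ((Real.sqrt 3 : ℂ))⁻¹ * ω ^ ((j : ℕ) * (p.2 : ℕ)) *
    (if i = 0 then trine p.2 p.1 else trinePerp p.2 p.1)

/-- The coefficients of `U_{2×3}`: `-i` on `|00⟩` and `|12⟩`, `1` elsewhere. -/
noncomputable def U23coeff : Fin 2 → Fin 3 → ℂ :=
  ![![-Complex.I, 1, 1], ![1, 1, -Complex.I]]

/-- The gate `U_{2×3} = -i|w₀₀⟩⟨00| + |w₀₁⟩⟨01| + |w₀₂⟩⟨02|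
 + |w₁₀⟩⟨10| + |w₁₁⟩⟨11| - i|w₁₂⟩⟨12|` on `ℂ² ⊗ ℂ³`. -/
noncomputable def U23 : Matrix (Fin 2 × Fin 3) (Fin 2 × Fin 3) ℂ :=
  Matrix.of fun p q => U23coeff q.1 q.2 * w q.1 q.2 p

lemma hω3 : ω ^ 3 = 1 := by
  simpa [ω] using (Complex.isPrimitiveRoot_exp 3 (by norm_num)).pow_eq_one

lemma hωstarmul : (starRingEnd ℂ) ω * ω = 1 := by
  rw [ω, ← Complex.exp_conj, ← Complex.exp_add]
  rw [show (starRingEnd ℂ) (2 * (Real.pi:ℂ) * Complex.I / 3) + 2 * (Real.pi:ℂ) * Complex.I / 3 = 0 by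
    simp [map_div₀, Complex.conj_I, Complex.conj_ofReal, map_ofNat]; ring]
  exact Complex.exp_zero

lemma hωstar : (starRingEnd ℂ) ω = ω ^ 2 := by
  linear_combination ω ^ 2 * hωstarmul + (-(starRingEnd ℂ) ω) * hω3

lemma hωplus : 1 + ω + ω ^ 2 = 0 := by
  have hne : ω ≠ 1 := by
    simpa [ω] using (Complex.isPrimitiveRoot_exp 3 (by norm_num)).ne_one (by norm_num)
  have h : (ω - 1) * (1 + ω + ω ^ 2) = 0 := by linear_combination hω3
  rcases mul_eq_zero.mp h with h | h
  · exact absurd (sub_eq_zero.mp h) hne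
  · exact h

lemma hω4 : ω ^ 4 = ω := by linear_combination ω * hω3
lemma hω5 : ω ^ 5 = ω ^ 2 := by linear_combination ω ^ 2 * hω3
lemma hω6 : ω ^ 6 = 1 := by linear_combination (ω ^ 3 + 1) * hω3
lemma hω7 : ω ^ 7 = ω := by linear_combination (ω ^ 4 + ω) * hω3
lemma hω8 : ω ^ 8 = ω ^ 2 := by linear_combination (ω ^ 5 + ω ^ 2) * hω3
lemma hω9 : ω ^ 9 = 1 := by linear_combination (ω ^ 6 + ω ^ 3 + 1) * hω3
lemma hω10 : ω ^ 10 = ω := by linear_combination (ω ^ 7 + ω ^ 4 + ω) * hω3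
lemma hω11 : ω ^ 11 = ω ^ 2 := by linear_combination (ω ^ 8 + ω ^ 5 + ω ^ 2) * hω3
lemma hω12 : ω ^ 12 = 1 := by linear_combination (ω ^ 9 + ω ^ 6 + ω ^ 3 + 1) * hω3

lemma hS : (Real.sqrt 3 : ℂ) ^ 2 = 3 := by
  norm_cast
  rw [Real.sq_sqrt] <;> norm_num

lemma hSinv : ((Real.sqrt 3 : ℂ))⁻¹ ^ 2 = 1 / 3 := by
  rw [inv_pow, hS]
  norm_num

set_option maxHeartbeats 1000000 in
lemma w_orthonormal : ∀ (i : Fin 2) (j : Fin 3) (i' : Fin 2) (j' : Fin 3),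
    (∑ p : Fin 2 × Fin 3, star (w i j p) * w i' j' p) =
      if i = i' ∧ j = j' then 1 else 0 := by
  intro i j i' j'
  rw [Fintype.sum_prod_type]
  simp only [Fin.sum_univ_two, Fin.sum_univ_three]
  fin_cases i <;> fin_cases i' <;> fin_cases j <;> fin_cases j' <;>
    simp only [w, trine, trinePerp, Matrix.cons_val_zero, Matrix.cons_val_one, Matrix.head_cons,
      Matrix.cons_val_two, Matrix.tail_cons, Fin.isValue, Fin.mk_zero, Fin.mk_one, reduceIte,
      Fin.reduceEq, and_self, and_true, true_and, and_false, false_and,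
      Fin.val_zero, Fin.val_one, Fin.val_two, pow_zero, pow_one,
      Nat.mul_zero, Nat.zero_mul, Nat.mul_one, Nat.one_mul, mul_one, mul_zero, one_mul,
      Complex.star_def, map_mul, map_pow, map_inv₀, map_one, map_neg, map_div₀, map_ofNat,
      Complex.conj_ofReal, hωstar] <;>
    ring_nf <;>
    (try simp only [hω3, hω4, hω5, hω6, hω7, hω8, hω9, hω10, hω11, hω12, hS, hSinv]) <;>
    (try ring_nf) <;>
    first
      | (norm_num; done)
      | linear_combination (1/3) * hωplus
      | linear_combination (-(1/3)) * hωplus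
      | linear_combination (1/3) * ω * hωplus
      | linear_combination (-(1/3)) * ω * hωplus
      | linear_combination hωplus
      | linear_combination (-1) * hωplus
      | (rw [if_neg (by decide)]; linear_combination (1/3) * hωplus)
      | (rw [if_pos (by decide)]; norm_num; done)
      | (norm_num; linear_combination (1/3) * hωplus)

/-- The six vectors `|w_{ij}⟩` form an orthonormal basis of `ℂ² ⊗ ℂ³`;
consequently `U_{2×3}` is unitary. -/
theorem w_orthonormal_and_U23_unitary :
    (∀ i j i' j', (∑ p : Fin 2 × Fin 3, star (w i j p) * w i' j' p) =
      if i = i' ∧ j = j' then 1 else 0) ∧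
    U23 ∈ Matrix.unitaryGroup (Fin 2 × Fin 3) ℂ := by
  refine ⟨w_orthonormal, ?_⟩
  rw [Matrix.mem_unitaryGroup_iff']
  ext q q'
  rw [Matrix.mul_apply]
  have h1 : ∀ p, (star U23) q p * U23 p q' =
      (star (U23coeff q.1 q.2) * U23coeff q'.1 q'.2) * (star (w q.1 q.2 p) * w q'.1 q'.2 p) := by
    intro p
    simp only [U23, Matrix.star_apply, Matrix.of_apply, star_mul']
    ring
  rw [Finset.sum_congr rfl (fun p _ => h1 p), ← Finset.mul_sum, w_orthonormal]
  by_cases h : q = q'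
  · subst h
    rw [if_pos ⟨rfl, rfl⟩, mul_one, Matrix.one_apply_eq]
    obtain ⟨a, b⟩ := q
    fin_cases a <;> fin_cases b <;>
      norm_num [U23coeff, Complex.star_def, Complex.conj_I, mul_neg, Complex.I_mul_I]
  · rw [if_neg (fun hc => h (Prod.ext hc.1 hc.2)), mul_zero, Matrix.one_apply_ne h]
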